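/- Let G be a finite simple graph on n ≥ 3 vertices. Then th_dim(G) = n − 1 if and only if for every three distinct vertices of G there is a labeling of them as x, y, z such that N(x) \ {y, z} = N(y) \ {x, z}, where N denotes the open neighborhood in G. -/

import Mathlib

open SimpleGraph Filter

/-- The `r`-truncated distance between vertices: `min(d(u,v), r+1)`. -/
noncomputable def truncDist {V : Type*} (G : SimpleGraph V) (r : ℕ) (u v : V) : ℕ∞ :=
  min (G.edist u v) (r + 1)

/-- `S` is a distance-`r` resolving set of `G`. -/
def IsDistResolving {V : Type*} (G : SimpleGraph V) (r : ℕ) (S : Finset V) : Prop :=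
  ∀ x y : V, x ≠ y → ∃ v ∈ S, truncDist G r v x ≠ truncDist G r v y

/-- The `r`-truncated metric dimension of `G`. -/
noncomputable def dimr {V : Type*} (G : SimpleGraph V) (r : ℕ) : ℕ :=
  sInf {k | ∃ S : Finset V, IsDistResolving G r S ∧ S.card = k}

/-- The metric dimension throttling number of `G`. -/
noncomputable def thDim {V : Type*} (G : SimpleGraph V) : ℕ :=
  sInf {m | ∃ r : ℕ, m = r + dimr G r}

/-- `S` is a resolving set of `G` (untruncated distances). -/
def IsResolving {V : Type*} (G : SimpleGraph V) (S : Finset V) : Prop :=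
  ∀ x y : V, x ≠ y → ∃ v ∈ S, G.edist v x ≠ G.edist v y

/-- The metric dimension of `G`. -/
noncomputable def metricDim {V : Type*} (G : SimpleGraph V) : ℕ :=
  sInf {k | ∃ S : Finset V, IsResolving G S ∧ S.card = k}

/-- Distance from an edge (as an unordered pair `{u,w}`) to a vertex:
`min(d(u,v), d(w,v))`. -/
noncomputable def edgeEDist {V : Type*} (G : SimpleGraph V) (e : Sym2 V) (v : V) : ℕ∞ :=
  Sym2.lift ⟨fun a b => min (G.edist a v) (G.edist b v), fun _ _ => min_comm _ _⟩ e

/-- The `r`-truncated distance from an edge to a vertex. -/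
noncomputable def truncEdgeDist {V : Type*} (G : SimpleGraph V) (r : ℕ) (e : Sym2 V)
    (v : V) : ℕ∞ :=
  min (edgeEDist G e v) (r + 1)

/-- `S` is a distance-`r` edge resolving set of `G`. -/
def IsEdgeResolving {V : Type*} (G : SimpleGraph V) (r : ℕ) (S : Finset V) : Prop :=
  ∀ e ∈ G.edgeSet, ∀ f ∈ G.edgeSet, e ≠ f →
    ∃ v ∈ S, truncEdgeDist G r e v ≠ truncEdgeDist G r f v

/-- The `r`-truncated edge metric dimension of `G`. -/
noncomputable def edimr {V : Type*} (G : SimpleGraph V) (r : ℕ) : ℕ :=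
  sInf {k | ∃ S : Finset V, IsEdgeResolving G r S ∧ S.card = k}

/-- The edge metric dimension throttling number of `G`. -/
noncomputable def thEdim {V : Type*} (G : SimpleGraph V) : ℕ :=
  sInf {m | ∃ r : ℕ, m = r + edimr G r}

/-- An item of `G` is a vertex or an edge; distance from an item to a vertex. -/
noncomputable def itemEDist {V : Type*} (G : SimpleGraph V) : V ⊕ G.edgeSet → V → ℕ∞
  | Sum.inl u, v => G.edist u v
  | Sum.inr e, v => edgeEDist G (e : Sym2 V) v

/-- The `r`-truncated distance from an item to a vertex. -/
noncomputable def truncItemDist {V : Type*} (G : SimpleGraph V) (r : ℕ)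
    (t : V ⊕ G.edgeSet) (v : V) : ℕ∞ :=
  min (itemEDist G t v) (r + 1)

/-- `S` is a distance-`r` mixed resolving set of `G`. -/
def IsMixedResolving {V : Type*} (G : SimpleGraph V) (r : ℕ) (S : Finset V) : Prop :=
  ∀ t₁ t₂ : V ⊕ G.edgeSet, t₁ ≠ t₂ →
    ∃ v ∈ S, truncItemDist G r t₁ v ≠ truncItemDist G r t₂ v

/-- The `r`-truncated mixed metric dimension of `G`. -/
noncomputable def mdimr {V : Type*} (G : SimpleGraph V) (r : ℕ) : ℕ :=
  sInf {k | ∃ S : Finset V, IsMixedResolving G r S ∧ S.card = k}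

/-- The mixed metric dimension throttling number of `G`. -/
noncomputable def thMdim {V : Type*} (G : SimpleGraph V) : ℕ :=
  sInf {m | ∃ r : ℕ, m = r + mdimr G r}

/-- `S` is a mixed resolving set of `G` (untruncated distances). -/
def IsMixedResolvingSet {V : Type*} (G : SimpleGraph V) (S : Finset V) : Prop :=
  ∀ t₁ t₂ : V ⊕ G.edgeSet, t₁ ≠ t₂ → ∃ v ∈ S, itemEDist G t₁ v ≠ itemEDist G t₂ v

/-- The mixed metric dimension of `G`. -/
noncomputable def mixedDim {V : Type*} (G : SimpleGraph V) : ℕ :=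
  sInf {k | ∃ S : Finset V, IsMixedResolvingSet G S ∧ S.card = k}


/-!
Write `D(a, b)` (`G.separators a b`) for the set of vertices other than `a, b` adjacent to exactly
one of them; the condition says that any three vertices can be labelled `a, b, c` with
`D(a, b) ⊆ {c}`.

At `r = 1` a landmark tells `a` and `b` apart exactly when it is one of them or lies in `D(a, b)`.
So if `x, y, z` violate the condition, each `D` of two of them has a vertex outside `{x, y, z}`,
and `V \ {x, y, z}` gives `th_dim(G) ≤ 1 + (n - 3)`; while `V \ {v}` always gives
`th_dim(G) ≤ n - 1`.

Conversely, assume the condition and let `S` resolve at distance `r`. If a landmark tells apart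
`a, b ∉ S`, then on a shortest path from it to the nearer of the two, the vertex before the end
lies in `D(a, b)`; hence `D(a, b) ≠ ∅`, and `D(a, b) ⊆ {c}` forces `D(a, b) = {c}`. It remains
to see that at most `r + 1` vertices lie outside `S`. For `r = 0, 1` this is direct. For `r = 2`,
if `D(p, q) = {w}` with `p, q, w ∉ S`, the condition applied to `p, q` and a landmark telling them
apart shows that `p` or `q` has no neighbour besides the other, and four non-landmarks cannot all
fit this pattern. Five non-landmarks are impossible for every `r`: if `D(x, y) = {z}`, then for
two more `u, v` the sets `D(u, x), D(u, y), D(v, x), D(v, y)` lie in `{x, y, z}`, and the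
condition on `u, v, x` and on `u, v, y` gives both `D(u, v) = {x}` and `D(u, v) = {y}`.
-/

open scoped symmDiff

namespace SimpleGraph

section Separators

variable {V : Type*} {G : SimpleGraph V} {a b c w x y z u : V}

def separators (G : SimpleGraph V) (a b : V) : Set V :=
  (G.neighborSet a ∆ G.neighborSet b) \ {a, b}

lemma mem_separators : w ∈ G.separators a b ↔ w ≠ a ∧ w ≠ b ∧ ¬(G.Adj a w ↔ G.Adj b w) := by
  simp only [separators, Set.mem_sdiff, Set.mem_symmDiff, mem_neighborSet, Set.mem_insert_iff,
    Set.mem_singleton_iff]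
  tauto

lemma separators_comm (a b : V) : G.separators a b = G.separators b a := by
  rw [separators, separators, symmDiff_comm, Set.pair_comm]

lemma separators_subset_insert (a b c : V) :
    G.separators a b ⊆ insert c (G.separators a c ∪ G.separators c b) := by
  intro w hw
  simp only [Set.mem_insert_iff, Set.mem_union, mem_separators] at hw ⊢
  tauto

lemma adj_iff_of_separators_subset (h : G.separators a b ⊆ {c}) (hwa : w ≠ a) (hwb : w ≠ b)
    (hwc : w ≠ c) : G.Adj a w ↔ G.Adj b w := by
  by_contra hw
  exact hwc (h (mem_separators.mpr ⟨hwa, hwb, hw⟩))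

lemma neighborSet_sdiff_eq_iff_separators_subset :
    G.neighborSet a \ {b, c} = G.neighborSet b \ {a, c} ↔ G.separators a b ⊆ {c} := by
  simp only [Set.ext_iff, Set.subset_def, mem_separators, Set.mem_sdiff, mem_neighborSet,
    Set.mem_insert_iff, Set.mem_singleton_iff]
  refine forall_congr' fun w => ?_
  by_cases hwa : w = a
  · subst hwa; simp
  by_cases hwb : w = b
  · subst hwb; simp
  tauto

lemma separators_subset_triple_of_subset_singleton (h₁ : G.separators x y ⊆ {z})
    (h₂ : G.separators x u ⊆ {y}) :
    G.separators u x ⊆ {x, y, z} ∧ G.separators u y ⊆ {x, y, z} := by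
  have hux : G.separators u x ⊆ {y} := separators_comm x u ▸ h₂
  refine ⟨hux.trans (by simp), fun w hw => ?_⟩
  rcases separators_subset_insert u y x hw with rfl | hw | hw
  · simp
  · obtain rfl : w = y := hux hw
    simp
  · obtain rfl : w = z := h₁ hw
    simp

def EveryTripleHasTwins (G : SimpleGraph V) : Prop :=
  ∀ x y z : V, x ≠ y → x ≠ z → y ≠ z →
    G.separators x y ⊆ {z} ∨ G.separators x z ⊆ {y} ∨ G.separators y z ⊆ {x}

end Separators

section Distances

variable {V : Type*} {G : SimpleGraph V} {s x y z : V}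

lemma exists_adj_edist_add_one_eq (hsx : s ≠ x) (hx : G.edist s x ≠ ⊤) :
    ∃ w, G.Adj w x ∧ G.edist s w + 1 = G.edist s x := by
  obtain ⟨p, hp⟩ := exists_walk_of_edist_ne_top hx
  have hp' : ¬p.Nil := fun h => hsx h.eq
  have hadj := p.adj_penultimate hp'
  refine ⟨p.penultimate, hadj, le_antisymm ?_ ?_⟩
  · rw [← hp, ← Walk.length_dropLast_add_one hp', Nat.cast_add_one]
    exact add_le_add_left p.dropLast.edist_le 1
  · calc G.edist s x ≤ G.edist s p.penultimate + G.edist p.penultimate x := G.edist_triangle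
      _ = G.edist s p.penultimate + 1 := by rw [edist_eq_one_iff_adj.mpr hadj]

lemma edist_eq_top_of_neighborSet_eq_empty (hx : G.neighborSet x = ∅) (hsx : s ≠ x) :
    G.edist s x = ⊤ := by
  by_contra h
  obtain ⟨w, hw, -⟩ := exists_adj_edist_add_one_eq hsx h
  exact (Set.eq_empty_iff_forall_notMem.mp hx w) hw.symm

lemma eq_or_eq_or_eq_of_edist_le_two (hx : G.neighborSet x ⊆ {y})
    (hy : G.neighborSet y ⊆ {x, z}) (h : G.edist s x ≤ 2) : s = x ∨ s = y ∨ s = z := by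
  by_cases hsx : s = x
  · exact .inl hsx
  obtain ⟨w, hwx, hw⟩ := exists_adj_edist_add_one_eq hsx (ne_top_of_le_ne_top (by simp) h)
  obtain rfl : w = y := hx hwx.symm
  have : G.edist s w ≤ 1 := by simpa [← one_add_one_eq_two] using hw.trans_le h
  rcases edist_le_one_iff_adj_or_eq.mp this with hsw | rfl
  · rcases hy hsw.symm with rfl | rfl
    · exact .inl rfl
    · exact .inr (.inr rfl)
  · exact .inr (.inl rfl)

end Distances

end SimpleGraph

open SimpleGraph

section TruncDist

variable {V : Type*} {G : SimpleGraph V} {r : ℕ} {S : Finset V} {a b c s u v x y : V}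

lemma truncDist_eq_zero_iff : truncDist G r u v = 0 ↔ u = v := by
  simp [truncDist]

lemma truncDist_self_ne (huv : u ≠ v) : truncDist G r u u ≠ truncDist G r u v := by
  rw [truncDist_eq_zero_iff.mpr rfl]
  exact fun h => huv (truncDist_eq_zero_iff.mp h.symm)

lemma truncDist_zero_of_ne (huv : u ≠ v) : truncDist G 0 u v = 1 := by
  simpa [truncDist] using Order.one_le_iff_pos.mpr (edist_pos_of_ne huv)

lemma truncDist_one_of_adj (h : G.Adj u v) : truncDist G 1 u v = 1 := by
  simp [truncDist, edist_eq_one_iff_adj.mpr h]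

lemma truncDist_one_of_not_adj (huv : u ≠ v) (h : ¬G.Adj u v) : truncDist G 1 u v = 2 := by
  have : 1 < G.edist u v := not_le.mp (by simpa [edist_le_one_iff_adj_or_eq, h] using huv)
  simpa [truncDist, one_add_one_eq_two] using Order.add_one_le_of_lt this

lemma truncDist_one_ne_iff (hux : u ≠ x) (huy : u ≠ y) :
    truncDist G 1 u x ≠ truncDist G 1 u y ↔ ¬(G.Adj u x ↔ G.Adj u y) := by
  by_cases hx : G.Adj u x <;> by_cases hy : G.Adj u y <;>
    simp [hx, hy, truncDist_one_of_adj, truncDist_one_of_not_adj, hux, huy]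

lemma edist_le_of_truncDist_lt (h : truncDist G r s x < truncDist G r s y) :
    G.edist s x ≤ r := by
  have := h.trans_le (min_le_right _ _)
  exact ENat.lt_natCast_add_one_iff.mp (by simpa [truncDist] using this)

lemma edist_lt_edist_of_truncDist_lt (h : truncDist G r s x < truncDist G r s y) :
    G.edist s x < G.edist s y := by
  have hx : truncDist G r s x = G.edist s x :=
    min_eq_left ((edist_le_of_truncDist_lt h).trans le_self_add)
  exact (hx ▸ h).trans_le (min_le_left _ _)

lemma exists_mem_separators_of_truncDist_lt (hsx : s ≠ x)
    (h : truncDist G r s x < truncDist G r s y) :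
    ∃ w ∈ G.separators x y, G.Adj x w ∧ G.edist s w + 1 = G.edist s x := by
  have hlt := edist_lt_edist_of_truncDist_lt h
  have hfin : G.edist s x ≠ ⊤ :=
    ((edist_le_of_truncDist_lt h).trans_lt (ENat.natCast_lt_top r)).ne
  obtain ⟨w, hwx, hw⟩ := exists_adj_edist_add_one_eq hsx hfin
  have hwy : w ≠ y := by
    rintro rfl
    rw [← hw] at hlt
    exact hlt.not_ge le_self_add
  have hyw : ¬G.Adj y w := fun hyw => by
    have := G.edist_triangle (u := s) (v := w) (w := y)
    rw [edist_eq_one_iff_adj.mpr hyw.symm, hw] at this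
    exact hlt.not_ge this
  exact ⟨w, mem_separators.mpr ⟨hwx.ne, hwy, by simp [hwx.symm, hyw]⟩, hwx.symm, hw⟩

namespace IsDistResolving

lemma separators_nonempty (hS : IsDistResolving G r S) (ha : a ∉ S) (hb : b ∉ S) (hab : a ≠ b) :
    (G.separators a b).Nonempty := by
  obtain ⟨s, hs, hne⟩ := hS a b hab
  rcases hne.lt_or_gt with h | h
  · obtain ⟨w, hw, -⟩ := exists_mem_separators_of_truncDist_lt (ne_of_mem_of_not_mem hs ha) h
    exact ⟨w, hw⟩
  · obtain ⟨w, hw, -⟩ := exists_mem_separators_of_truncDist_lt (ne_of_mem_of_not_mem hs hb) h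
    exact ⟨w, separators_comm a b ▸ hw⟩

lemma mem_separators_of_subset_singleton (hS : IsDistResolving G r S) (ha : a ∉ S) (hb : b ∉ S)
    (hab : a ≠ b) (h : G.separators a b ⊆ {c}) : c ∈ G.separators a b := by
  rw [(hS.separators_nonempty ha hb hab).subset_singleton_iff.mp h]
  rfl

lemma exists_edist_le_of_neighborSet_eq_empty (hS : IsDistResolving G r S) (hb : b ∉ S)
    (hab : a ≠ b) (hb₀ : G.neighborSet b = ∅) : ∃ s ∈ S, G.edist s a ≤ r := by
  obtain ⟨s, hs, hne⟩ := hS a b hab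
  have hsb : truncDist G r s b = r + 1 := by
    simp [truncDist, edist_eq_top_of_neighborSet_eq_empty hb₀ (ne_of_mem_of_not_mem hs hb)]
  refine ⟨s, hs, edist_le_of_truncDist_lt (y := b) ?_⟩
  rw [hsb] at hne ⊢
  exact hne.lt_of_le (min_le_right _ _)

lemma card_compl_le_one [Fintype V] [DecidableEq V] (hS : IsDistResolving G 0 S) :
    Sᶜ.card ≤ 1 := by
  refine Finset.card_le_one.mpr fun a ha b hb => ?_
  by_contra hab
  obtain ⟨s, hs, hne⟩ := hS a b hab
  rw [Finset.mem_compl] at ha hb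
  rw [truncDist_zero_of_ne (ne_of_mem_of_not_mem hs ha),
    truncDist_zero_of_ne (ne_of_mem_of_not_mem hs hb)] at hne
  exact hne rfl

end IsDistResolving

lemma isDistResolving_one_iff :
    IsDistResolving G 1 S ↔ ∀ a ∉ S, ∀ b ∉ S, a ≠ b → ∃ s ∈ S, s ∈ G.separators a b := by
  refine ⟨fun hS a ha b hb hab => ?_, fun h a b hab => ?_⟩
  · obtain ⟨s, hs, hne⟩ := hS a b hab
    have hsa := ne_of_mem_of_not_mem hs ha
    have hsb := ne_of_mem_of_not_mem hs hb
    refine ⟨s, hs, mem_separators.mpr ⟨hsa, hsb, ?_⟩⟩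
    simpa [G.adj_comm] using (truncDist_one_ne_iff hsa hsb).mp hne
  by_cases ha : a ∈ S
  · exact ⟨a, ha, truncDist_self_ne hab⟩
  by_cases hb : b ∈ S
  · exact ⟨b, hb, (truncDist_self_ne hab.symm).symm⟩
  obtain ⟨s, hs, hsep⟩ := h a ha b hb hab
  obtain ⟨hsa, hsb, hadj⟩ := mem_separators.mp hsep
  exact ⟨s, hs, (truncDist_one_ne_iff hsa hsb).mpr (by simpa [G.adj_comm] using hadj)⟩

end TruncDist

namespace SimpleGraph.EveryTripleHasTwins

variable {V : Type*} {G : SimpleGraph V} {r : ℕ} {S : Finset V} {p q s t u v w x y z : V}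

lemma card_le_of_forall_separators_subset (hC : G.EveryTripleHasTwins) {T : Finset V} {k : ℕ}
    (hk : 2 ≤ k)
    (h : ∀ x ∈ T, ∀ y ∈ T, ∀ z ∈ T, x ≠ y → x ≠ z → y ≠ z → G.separators x y ⊆ {z} →
      T.card ≤ k) :
    T.card ≤ k := by
  by_contra hT
  obtain ⟨a, ha, b, hb, c, hc, hab, hac, hbc⟩ := Finset.two_lt_card.mp (by omega : 2 < T.card)
  rcases hC a b c hab hac hbc with h' | h' | h'
  · exact hT (h a ha b hb c hc hab hac hbc h')
  · exact hT (h a ha c hc b hb hac hab hbc.symm h')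
  · exact hT (h b hb c hc a ha hbc hab.symm hac.symm h')

lemma card_compl_le_two [Fintype V] [DecidableEq V] (hC : G.EveryTripleHasTwins)
    (hS : IsDistResolving G 1 S) : Sᶜ.card ≤ 2 :=
  hC.card_le_of_forall_separators_subset le_rfl fun x hx y hy z hz hxy _ _ h => by
    rw [Finset.mem_compl] at hx hy hz
    obtain ⟨s, hs, hsep⟩ := isDistResolving_one_iff.mp hS x hx y hy hxy
    exact absurd ((h hsep : s = z) ▸ hs) hz

lemma neighborSet_subset_of_truncDist_two_lt (hC : G.EveryTripleHasTwins)
    (hs : s ∈ S) (hp : p ∉ S) (hq : q ∉ S) (hw : w ∉ S) (hpq : p ≠ q)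
    (h : G.separators p q ⊆ {w}) (hlt : truncDist G 2 s p < truncDist G 2 s q) :
    G.neighborSet q ⊆ {p} := by
  have hsp := ne_of_mem_of_not_mem hs hp
  have hsq := ne_of_mem_of_not_mem hs hq
  have hsw := ne_of_mem_of_not_mem hs hw
  obtain ⟨w', hw', hpw, hdist⟩ := exists_mem_separators_of_truncDist_lt hsp hlt
  obtain rfl : w = w' := (h hw').symm
  obtain ⟨hwp, hwq, hadj⟩ := mem_separators.mp hw'
  have hqw : ¬G.Adj q w := fun hqw => hadj (iff_of_true hpw hqw)
  have hsw' : G.Adj s w := by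
    have : G.edist s w ≤ 1 := by
      simpa [← one_add_one_eq_two] using hdist.trans_le (edist_le_of_truncDist_lt hlt)
    exact (edist_le_one_iff_adj_or_eq.mp this).resolve_right hsw
  have hsp₂ : G.edist s p = 2 := by
    rw [← hdist, edist_eq_one_iff_adj.mpr hsw', one_add_one_eq_two]
  obtain ⟨-, hsq', hcommon⟩ := two_lt_edist_iff.mp (hsp₂ ▸ edist_lt_edist_of_truncDist_lt hlt)
  rcases hC p q s hpq hsp.symm hsq.symm with h' | h' | h'
  · exact (hsw (h' hw').symm).elim
  · -- a neighbour of `q` other than `p` would be a common neighbour of `s` and `q`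
    intro n (hn : G.Adj q n)
    by_contra hnp
    have hnw : n ≠ w := by rintro rfl; exact hqw hn
    have hpn : G.Adj p n := (adj_iff_of_separators_subset h hnp hn.ne' hnw).mpr hn
    have hns : n ≠ s := by rintro rfl; exact hsq' hn.symm
    have hsn : G.Adj s n := (adj_iff_of_separators_subset h' hnp hns hn.ne').mp hpn
    exact (Set.eq_empty_iff_forall_notMem.mp hcommon n) ⟨hsn, hn⟩
  · exact (hwp (h' (mem_separators.mpr ⟨hwq, hsw.symm, by simp [hqw, hsw']⟩))).elim

lemma neighborSet_subset_or (hC : G.EveryTripleHasTwins) (hS : IsDistResolving G 2 S)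
    (hp : p ∉ S) (hq : q ∉ S) (hw : w ∉ S) (hpq : p ≠ q) (h : G.separators p q ⊆ {w}) :
    G.neighborSet p ⊆ {q} ∨ G.neighborSet q ⊆ {p} := by
  obtain ⟨s, hs, hne⟩ := hS p q hpq
  rcases hne.lt_or_gt with hlt | hlt
  · exact .inr (hC.neighborSet_subset_of_truncDist_two_lt hs hp hq hw hpq h hlt)
  · refine .inl (hC.neighborSet_subset_of_truncDist_two_lt hs hq hp hw hpq.symm ?_ hlt)
    rwa [separators_comm]

lemma false_of_separators_subset (hC : G.EveryTripleHasTwins) (hS : IsDistResolving G 2 S)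
    (hx : x ∉ S) (hy : y ∉ S) (hz : z ∉ S) (hu : u ∉ S)
    (hxy : x ≠ y) (hxu : x ≠ u) (hyu : y ≠ u) (hzu : z ≠ u)
    (h₁ : G.separators x y ⊆ {z}) (h₂ : G.separators x u ⊆ {y}) : False := by
  obtain ⟨hzx, hzy, hz₁⟩ := mem_separators.mp (hS.mem_separators_of_subset_singleton hx hy hxy h₁)
  obtain ⟨-, -, hy₂⟩ := mem_separators.mp (hS.mem_separators_of_subset_singleton hx hu hxu h₂)
  rcases hC.neighborSet_subset_or hS hx hy hz hxy h₁ with hNx | hNy <;>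
    rcases hC.neighborSet_subset_or hS hx hu hy hxu h₂ with hNx' | hNu
  · have hyu' : G.Adj y u := by
      have : ¬G.Adj x y := fun hxy' => hyu (hNx' hxy')
      simpa [this, G.adj_comm] using hy₂
    have hxu' := (adj_iff_of_separators_subset h₁ hxu.symm hyu.symm hzu.symm).mpr hyu'
    exact hyu (hNx hxu').symm
  · -- `u` is isolated, so some landmark is within distance `2` of `x`; but that ball is `{x, y, z}`
    have hNu₀ : G.neighborSet u = ∅ := Set.eq_empty_iff_forall_notMem.mpr fun v hv =>
      hyu (hNx (G.adj_symm ((hNu hv : v = x) ▸ hv))).symm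
    have hNy : G.neighborSet y ⊆ {x, z} := fun v (hv : G.Adj y v) => by
      by_contra hv'
      simp only [Set.mem_insert_iff, Set.mem_singleton_iff, not_or] at hv'
      have hxv := (adj_iff_of_separators_subset h₁ hv'.1 hv.ne' hv'.2).mpr hv
      exact hv.ne' (hNx hxv)
    obtain ⟨s, hs, hsx⟩ := hS.exists_edist_le_of_neighborSet_eq_empty hu hxu hNu₀
    rcases eq_or_eq_or_eq_of_edist_le_two hNx hNy hsx with rfl | rfl | rfl <;> contradiction
  · have hxz : G.Adj x z := by
      have : ¬G.Adj y z := fun hyz => hzx (hNy hyz)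
      simpa [this] using hz₁
    exact hzu (hNx' hxz)
  · have hxz : G.Adj x z := by
      have : ¬G.Adj y z := fun hyz => hzx (hNy hyz)
      simpa [this] using hz₁
    have huz := (adj_iff_of_separators_subset h₂ hzx hzu hzy).mp hxz
    exact hzx (hNu huz)

lemma card_compl_le_three [Fintype V] [DecidableEq V] (hC : G.EveryTripleHasTwins)
    (hS : IsDistResolving G 2 S) : Sᶜ.card ≤ 3 :=
  hC.card_le_of_forall_separators_subset (by norm_num) fun x hx y hy z hz hxy _ _ h => by
    by_contra hT
    obtain ⟨u, hu, hu'⟩ := Finset.exists_mem_notMem_of_card_lt_card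
      ((Finset.card_le_three (a := x) (b := y) (c := z)).trans_lt (not_le.mp hT))
    rw [Finset.mem_compl] at hx hy hz hu
    simp only [Finset.mem_insert, Finset.mem_singleton, not_or] at hu'
    obtain ⟨hux, huy, huz⟩ := hu'
    rcases hC x y u hxy (Ne.symm hux) (Ne.symm huy) with h' | h' | h'
    · exact huz (h' (hS.mem_separators_of_subset_singleton hx hy hxy h)).symm
    · exact hC.false_of_separators_subset hS hx hy hz hu hxy (Ne.symm hux) (Ne.symm huy)
        (Ne.symm huz) h h'
    · refine hC.false_of_separators_subset hS hy hx hz hu hxy.symm (Ne.symm huy) (Ne.symm hux)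
        (Ne.symm huz) ?_ h'
      rwa [separators_comm]

lemma separators_subset_triple (hC : G.EveryTripleHasTwins) (hS : IsDistResolving G r S)
    (hx : x ∉ S) (hy : y ∉ S) (hxy : x ≠ y) (hxu : x ≠ u) (hyu : y ≠ u) (hzu : z ≠ u)
    (h : G.separators x y ⊆ {z}) :
    G.separators u x ⊆ {x, y, z} ∧ G.separators u y ⊆ {x, y, z} := by
  rcases hC x y u hxy hxu hyu with h' | h' | h'
  · exact absurd (h' (hS.mem_separators_of_subset_singleton hx hy hxy h)) hzu
  · exact separators_subset_triple_of_subset_singleton h h'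
  · have := separators_subset_triple_of_subset_singleton (separators_comm x y ▸ h) h'
    rw [Set.insert_comm] at this
    exact this.symm

lemma separators_subset_singleton (hC : G.EveryTripleHasTwins) (hS : IsDistResolving G r S)
    {K : Set V} (ht : t ∉ S) (hu : u ∉ S) (hv : v ∉ S) (htu : t ≠ u) (htv : t ≠ v) (huv : u ≠ v)
    (huK : u ∉ K) (hvK : v ∉ K) (hut : G.separators u t ⊆ K) (hvt : G.separators v t ⊆ K) :
    G.separators u v ⊆ {t} := by
  rcases hC u v t huv htu.symm htv.symm with h | h | h
  · exact h
  · obtain ⟨w, hw⟩ := hS.separators_nonempty hu ht htu.symm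
    exact absurd ((h hw : w = v) ▸ hut hw) hvK
  · obtain ⟨w, hw⟩ := hS.separators_nonempty hv ht htv.symm
    exact absurd ((h hw : w = u) ▸ hvt hw) huK

lemma card_compl_le_four [Fintype V] [DecidableEq V] (hC : G.EveryTripleHasTwins)
    (hS : IsDistResolving G r S) : Sᶜ.card ≤ 4 :=
  hC.card_le_of_forall_separators_subset (by norm_num) fun x hx y hy z hz hxy _ _ h => by
    by_contra hT
    obtain ⟨u, hu, hu'⟩ := Finset.exists_mem_notMem_of_card_lt_card
      ((Finset.card_le_three (a := x) (b := y) (c := z)).trans_lt (by omega : 3 < Sᶜ.card))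
    obtain ⟨v, hv, hv'⟩ := Finset.exists_mem_notMem_of_card_lt_card
      ((Finset.card_le_four (a := x) (b := y) (c := z) (d := u)).trans_lt (not_le.mp hT))
    rw [Finset.mem_compl] at hx hy hu hv
    simp only [Finset.mem_insert, Finset.mem_singleton, not_or] at hu' hv'
    obtain ⟨hux, huy, huz⟩ := hu'
    obtain ⟨hvx, hvy, hvz, hvu⟩ := hv'
    obtain ⟨hux', huy'⟩ := hC.separators_subset_triple hS hx hy hxy (Ne.symm hux)
      (Ne.symm huy) (Ne.symm huz) h
    obtain ⟨hvx', hvy'⟩ := hC.separators_subset_triple hS hx hy hxy (Ne.symm hvx)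
      (Ne.symm hvy) (Ne.symm hvz) h
    have huK : u ∉ ({x, y, z} : Set V) := by simp [hux, huy, huz]
    have hvK : v ∉ ({x, y, z} : Set V) := by simp [hvx, hvy, hvz]
    have hx' := hC.separators_subset_singleton hS hx hu hv (Ne.symm hux) (Ne.symm hvx)
      (Ne.symm hvu) huK hvK hux' hvx'
    have hy' := hC.separators_subset_singleton hS hy hu hv (Ne.symm huy) (Ne.symm hvy)
      (Ne.symm hvu) huK hvK huy' hvy'
    obtain ⟨w, hw⟩ := hS.separators_nonempty hu hv (Ne.symm hvu)
    exact hxy ((hx' hw).symm.trans (hy' hw))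

lemma card_compl_le [Fintype V] [DecidableEq V] (hC : G.EveryTripleHasTwins)
    (hS : IsDistResolving G r S) : Sᶜ.card ≤ r + 1 :=
  match r, hS with
  | 0, hS => hS.card_compl_le_one
  | 1, hS => hC.card_compl_le_two hS
  | 2, hS => hC.card_compl_le_three hS
  | r + 3, hS => (hC.card_compl_le_four hS).trans (by omega)

end SimpleGraph.EveryTripleHasTwins

section ThrottlingNumber

variable {V : Type*} {G : SimpleGraph V} {r : ℕ} {S : Finset V} {x y z : V}

lemma thDim_le (G : SimpleGraph V) (r : ℕ) : thDim G ≤ r + dimr G r :=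
  Nat.sInf_le ⟨r, rfl⟩

lemma exists_thDim_eq (G : SimpleGraph V) : ∃ r, thDim G = r + dimr G r :=
  Nat.sInf_mem (s := {m | ∃ r, m = r + dimr G r}) ⟨_, 0, rfl⟩

lemma IsDistResolving.dimr_le (hS : IsDistResolving G r S) : dimr G r ≤ S.card :=
  Nat.sInf_le ⟨S, hS, rfl⟩

variable [Fintype V]

lemma exists_isDistResolving_card_eq_dimr (G : SimpleGraph V) (r : ℕ) :
    ∃ S, IsDistResolving G r S ∧ S.card = dimr G r :=
  Nat.sInf_mem (s := {k | ∃ S, IsDistResolving G r S ∧ S.card = k})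
    ⟨_, Finset.univ, fun x _ hxy => ⟨x, Finset.mem_univ x, truncDist_self_ne hxy⟩, rfl⟩

lemma isDistResolving_univ_erase [DecidableEq V] (G : SimpleGraph V) (r : ℕ) (v : V) :
    IsDistResolving G r (Finset.univ.erase v) := fun x y hxy => by
  by_cases hx : x = v
  · exact ⟨y, by simp [← hx, hxy.symm], (truncDist_self_ne hxy.symm).symm⟩
  · exact ⟨x, by simp [hx], truncDist_self_ne hxy⟩

lemma isDistResolving_one_compl_triple [DecidableEq V] (hxy : x ≠ y) (hxz : x ≠ z) (hyz : y ≠ z)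
    (h : ¬(G.separators x y ⊆ {z} ∨ G.separators x z ⊆ {y} ∨ G.separators y z ⊆ {x})) :
    IsDistResolving G 1 {x, y, z}ᶜ := by
  have hsep : ∀ {a b c}, ¬G.separators a b ⊆ {c} → {a, b, c} = ({x, y, z} : Finset V) →
      (∃ s ∈ ({x, y, z} : Finset V)ᶜ, s ∈ G.separators a b) ∧
        ∃ s ∈ ({x, y, z} : Finset V)ᶜ, s ∈ G.separators b a := by
    intro a b c h habc
    obtain ⟨s, hs, hsc⟩ := Set.not_subset.mp h
    obtain ⟨hsa, hsb, -⟩ := mem_separators.mp hs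
    have hsS : s ∈ ({x, y, z} : Finset V)ᶜ := by
      rw [Finset.mem_compl, ← habc]
      simpa [hsa, hsb] using hsc
    exact ⟨⟨s, hsS, hs⟩, s, hsS, separators_comm a b ▸ hs⟩
  simp only [not_or] at h
  obtain ⟨hxy', hyx'⟩ := hsep h.1 rfl
  obtain ⟨hxz', hzx'⟩ := hsep h.2.1 (congrArg (insert x) (Finset.pair_comm z y))
  obtain ⟨hyz', hzy'⟩ := hsep h.2.2 (by ext; simp; tauto)
  refine isDistResolving_one_iff.mpr fun a ha b hb hab => ?_
  simp only [Finset.mem_compl, not_not, Finset.mem_insert, Finset.mem_singleton] at ha hb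
  rcases ha with rfl | rfl | rfl <;> rcases hb with rfl | rfl | rfl <;>
    first | exact absurd rfl hab | assumption

lemma thDim_le_card_sub_one [Nonempty V] (G : SimpleGraph V) :
    thDim G ≤ Fintype.card V - 1 := by
  classical
  obtain ⟨v⟩ := ‹Nonempty V›
  have := (isDistResolving_univ_erase G 0 v).dimr_le
  rw [Finset.card_erase_of_mem (Finset.mem_univ v), Finset.card_univ] at this
  exact (thDim_le G 0).trans (by omega)

lemma thDim_le_card_sub_two (hxy : x ≠ y) (hxz : x ≠ z) (hyz : y ≠ z)
    (h : ¬(G.separators x y ⊆ {z} ∨ G.separators x z ⊆ {y} ∨ G.separators y z ⊆ {x})) :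
    thDim G ≤ Fintype.card V - 2 := by
  classical
  have hxyz : ({x, y, z} : Finset V).card = 3 :=
    Finset.card_eq_three.mpr ⟨x, y, z, hxy, hxz, hyz, rfl⟩
  have hcard := Finset.card_le_univ ({x, y, z} : Finset V)
  have hdim := (isDistResolving_one_compl_triple hxy hxz hyz h).dimr_le
  rw [Finset.card_compl, hxyz] at hdim
  have := thDim_le G 1
  omega

lemma SimpleGraph.EveryTripleHasTwins.card_sub_one_le_thDim (hC : G.EveryTripleHasTwins) :
    Fintype.card V - 1 ≤ thDim G := by
  classical
  obtain ⟨r, hr⟩ := exists_thDim_eq G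
  obtain ⟨S, hS, hcard⟩ := exists_isDistResolving_card_eq_dimr G r
  have := hC.card_compl_le hS
  rw [Finset.card_compl] at this
  have := Finset.card_le_univ S
  omega

end ThrottlingNumber

/-- For a graph `G` on `n ≥ 3` vertices, `th_dim(G) = n - 1` iff for
every three distinct vertices there is a labeling `x, y, z` of them with
`N(x) \ {y,z} = N(y) \ {x,z}`. -/
theorem stmt11 {V : Type*} [Fintype V] (G : SimpleGraph V)
    (h3 : 3 ≤ Fintype.card V) :
    thDim G = Fintype.card V - 1 ↔
      ∀ x y z : V, x ≠ y → x ≠ z → y ≠ z →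
        (G.neighborSet x \ {y, z} = G.neighborSet y \ {x, z}) ∨
        (G.neighborSet x \ {z, y} = G.neighborSet z \ {x, y}) ∨
        (G.neighborSet y \ {z, x} = G.neighborSet z \ {y, x}) := by
  have : Nonempty V := Fintype.card_pos_iff.mp (by omega)
  simp only [neighborSet_sdiff_eq_iff_separators_subset]
  show _ ↔ G.EveryTripleHasTwins
  refine ⟨fun hth x y z hxy hxz hyz => ?_, fun hC => ?_⟩
  · by_contra h
    have := thDim_le_card_sub_two hxy hxz hyz h
    omega
  · exact le_antisymm (thDim_le_card_sub_one G) hC.card_sub_one_le_thDim
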